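/- Let y : ℝ → ℝ be a continuously differentiable 2π-periodic function satisfying y(t+π) = -y(t) for all t. Then ∫₀^{2π} y(t)² dt ≤ ∫₀^{2π} y'(t)² dt. -/

import Mathlib

/-!
Antiperiodicity forces the mean of `y` over a period, i.e. its zeroth Fourier coefficient, to
vanish. Since `y` is periodic, integration by parts gives `ĉₙ(y) = ĉₙ(y') / (i n)` for `n ≠ 0`, so
`|ĉₙ(y)| ≤ |ĉₙ(y')|` for every `n`, and Parseval's identity turns this into the inequality
between the `L²` norms.
-/

open Real MeasureTheory Complex Set intervalIntegral
open scoped Interval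

theorem ContinuousOn.memLp_restrict_Ioc {E : Type*} [NormedAddCommGroup E] {f : ℝ → E}
    {a b : ℝ} (p : ENNReal) (hf : ContinuousOn f (Icc a b)) :
    MemLp f p (volume.restrict (Ioc a b)) := by
  obtain ⟨C, hC⟩ := isCompact_Icc.exists_bound_of_continuousOn hf
  have hIcc : MemLp f p (volume.restrict (Icc a b)) :=
    .of_bound (hf.aestronglyMeasurable measurableSet_Icc) C
      ((ae_restrict_iff' measurableSet_Icc).mpr (.of_forall hC))
  exact hIcc.mono_measure (Measure.restrict_mono Ioc_subset_Icc_self le_rfl)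

theorem Function.Antiperiodic.intervalIntegral_add_two_mul_eq_zero {E : Type*}
    [NormedAddCommGroup E] [NormedSpace ℝ E] {f : ℝ → E} {c : ℝ} (h : Function.Antiperiodic f c)
    {a : ℝ} (hf : IntervalIntegrable f volume a (a + c)) : ∫ x in a..a + 2 * c, f x = 0 := by
  have hshift : f = fun x ↦ -f (x - c) := funext fun x ↦ by rw [← h, sub_add_cancel]
  have hf' : IntervalIntegrable f volume (a + c) (a + 2 * c) := by
    rw [show a + 2 * c = a + c + c by ring, hshift]
    exact (hf.comp_sub_right c).neg
  rw [← integral_add_adjacent_intervals hf hf', show a + 2 * c = a + c + c by ring,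
    ← integral_comp_add_right]
  simp only [h _, intervalIntegral.integral_neg, add_neg_cancel]

theorem fourierCoeffOn_zero {E : Type*} [NormedAddCommGroup E] [NormedSpace ℂ E] {a b : ℝ}
    (hab : a < b) (f : ℝ → E) : fourierCoeffOn hab f 0 = (1 / (b - a)) • ∫ x in a..b, f x := by
  simp [fourierCoeffOn_eq_integral]

section Wirtinger

variable {a b : ℝ} {f f' : ℝ → ℂ}

theorem fourierCoeffOn_eq_of_hasDerivAt_of_eq (hab : a < b) {n : ℤ} (hn : n ≠ 0)
    (hf : ∀ x ∈ [[a, b]], HasDerivAt f (f' x) x) (hf' : IntervalIntegrable f' volume a b)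
    (hfab : f a = f b) :
    fourierCoeffOn hab f n = ((b - a : ℝ) : ℂ) / (2 * π * I * n) * fourierCoeffOn hab f' n := by
  rw [fourierCoeffOn_of_hasDerivAt hab hn hf hf', hfab, sub_self, mul_zero, zero_sub]
  have : (n : ℂ) ≠ 0 := Int.cast_ne_zero.mpr hn
  field_simp
  push_cast
  ring

theorem norm_fourierCoeffOn_le_of_hasDerivAt_of_eq (hab : a < b) {n : ℤ} (hn : n ≠ 0)
    (hf : ∀ x ∈ [[a, b]], HasDerivAt f (f' x) x) (hf' : IntervalIntegrable f' volume a b)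
    (hfab : f a = f b) :
    ‖fourierCoeffOn hab f n‖ ≤ (b - a) / (2 * π) * ‖fourierCoeffOn hab f' n‖ := by
  have h1n : (1 : ℝ) ≤ |(n : ℝ)| := by exact_mod_cast Int.one_le_abs hn
  have hscale : ‖((b - a : ℝ) : ℂ) / (2 * π * I * n)‖ = (b - a) / (2 * π * |(n : ℝ)|) := by
    rw [norm_div, norm_mul, norm_mul, norm_mul, norm_I, norm_intCast, Complex.norm_real,
      Complex.norm_real, Complex.norm_ofNat, Real.norm_eq_abs, Real.norm_eq_abs,
      abs_of_pos (sub_pos.mpr hab), abs_of_pos pi_pos, mul_one]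
  rw [fourierCoeffOn_eq_of_hasDerivAt_of_eq hab hn hf hf' hfab, norm_mul, hscale]
  gcongr ?_ * _
  exact div_le_div_of_nonneg_left (sub_pos.mpr hab).le (by positivity)
    (le_mul_of_one_le_right (by positivity) h1n)

theorem integral_norm_sq_le_of_hasDerivAt_of_integral_eq_zero (hab : a < b)
    (hf : ∀ x ∈ [[a, b]], HasDerivAt f (f' x) x) (hf' : MemLp f' 2 (volume.restrict (Ioc a b)))
    (hfab : f a = f b) (hmean : ∫ x in a..b, f x = 0) :
    ∫ x in a..b, ‖f x‖ ^ 2 ≤ ((b - a) / (2 * π)) ^ 2 * ∫ x in a..b, ‖f' x‖ ^ 2 := by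
  have hf'int : IntervalIntegrable f' volume a b :=
    (intervalIntegrable_iff_integrableOn_Ioc_of_le hab.le).mpr (hf'.integrable one_le_two)
  have hfL2 : MemLp f 2 (volume.restrict (Ioc a b)) := ContinuousOn.memLp_restrict_Ioc 2
    fun x hx ↦ (hf x (uIcc_of_le hab.le ▸ hx)).continuousAt.continuousWithinAt
  have hcoeff : ∀ n, ‖fourierCoeffOn hab f n‖ ^ 2
      ≤ ((b - a) / (2 * π)) ^ 2 * ‖fourierCoeffOn hab f' n‖ ^ 2 := by
    intro n
    rcases eq_or_ne n 0 with rfl | hn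
    · rw [fourierCoeffOn_zero, hmean, smul_zero, norm_zero, zero_pow two_ne_zero]
      positivity
    · rw [← mul_pow]
      gcongr
      exact norm_fourierCoeffOn_le_of_hasDerivAt_of_eq hab hn hf hf'int hfab
  have hparseval := hasSum_le hcoeff (hasSum_sq_fourierCoeffOn hab hfL2)
    ((hasSum_sq_fourierCoeffOn hab hf').mul_left _)
  rw [smul_eq_mul, smul_eq_mul, mul_left_comm] at hparseval
  exact le_of_mul_le_mul_left hparseval (inv_pos.mpr (sub_pos.mpr hab))

end Wirtinger

theorem poincare_odd_harmonics_general (y : ℝ → ℝ) (hy : ContDiff ℝ 1 y)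
    (hanti : ∀ t, y (t + π) = - y t) :
    ∫ t in (0:ℝ)..(2 * π), y t ^ 2 ≤ ∫ t in (0:ℝ)..(2 * π), deriv y t ^ 2 := by
  have hantiperiodic : Function.Antiperiodic y π := hanti
  have hderiv : ∀ t, HasDerivAt (fun t ↦ (y t : ℂ)) ((deriv y t : ℝ) : ℂ) t := fun t ↦
    ((hy.differentiable one_ne_zero t).hasDerivAt).ofReal_comp
  have hderiv_L2 : MemLp (fun t ↦ ((deriv y t : ℝ) : ℂ)) 2 (volume.restrict (Ioc 0 (2 * π))) :=
    ContinuousOn.memLp_restrict_Ioc 2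
      (continuous_ofReal.comp (hy.continuous_deriv le_rfl)).continuousOn
  have hendpoints : (y 0 : ℂ) = y (2 * π) := by
    simpa using congrArg ((↑) : ℝ → ℂ) (hantiperiodic.periodic_two_mul 0).symm
  have hmean : ∫ t in (0:ℝ)..2 * π, (y t : ℂ) = 0 := by
    rw [intervalIntegral.integral_ofReal, ← zero_add (2 * π),
      hantiperiodic.intervalIntegral_add_two_mul_eq_zero (hy.continuous.intervalIntegrable _ _),
      Complex.ofReal_zero]
  have hwirtinger := integral_norm_sq_le_of_hasDerivAt_of_integral_eq_zero two_pi_pos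
    (fun t _ ↦ hderiv t) hderiv_L2 hendpoints hmean
  simpa [sq_abs, div_self two_pi_pos.ne'] using hwirtinger

/-- Second-component Poincaré estimate: if `y : ℝ → ℝ` is `C¹`, `2π`-periodic and
`π`-antiperiodic (`y (t + π) = -y t`), then `∫₀^{2π} y² ≤ ∫₀^{2π} y'²`. -/
theorem poincare_odd_harmonics (y : ℝ → ℝ) (hy : ContDiff ℝ 1 y)
    (hper : Function.Periodic y (2 * π))
    (hanti : ∀ t, y (t + π) = - y t) :
    ∫ t in (0:ℝ)..(2 * π), y t ^ 2 ≤ ∫ t in (0:ℝ)..(2 * π), deriv y t ^ 2 :=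
  poincare_odd_harmonics_general y hy hanti
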